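/- Let U ∈ B(ℓ²(ℕ)) with ‖U‖ ≤ 1. Endow the vector space 𝕂 ⊕ ℓ²(ℕ) with the product (λ,x)(μ,y) = (⟨Ux, y⟩, 0) and the norm ‖(λ,x)‖ = |λ| + ‖x‖; this is a Banach algebra. Let A be its unitization and let α : A → ℓ²(ℕ)^~ be the natural unital projection, ((λ,x) + μ1) ↦ x + μ1, where ℓ²(ℕ)^~ is the unitization of ℓ²(ℕ) with the trivial product. Then α is a continuous surjective algebra homomorphism, the extension 0 → ker α → A → ℓ²(ℕ)^~ → 0 is singular and admissible, and the following are equivalent: (i) α has an algebra homomorphism right inverse; (ii) α has a continuous algebra homomorphism right inverse; (iii) U = 0. -/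

import Mathlib

set_option synthInstance.maxHeartbeats 1000000
set_option maxHeartbeats 1000000

/- Setting: given `U ∈ B(ℓ²(ℕ))` with `‖U‖ ≤ 1`, the vector space `𝕜 ⊕ ℓ²(ℕ)` is
endowed with the product `(λ,x)(μ,y) = (⟨Ux, y⟩, 0)` and the norm `‖(λ,x)‖ = |λ| + ‖x‖`
(the `WithLp 1` norm), making it a (non-unital) Banach algebra `ReadCore 𝕜 U`.  Its
unitization `A = WithLp 1 (Unitization 𝕜 (ReadCore 𝕜 U))` carries the norm
`‖y + μ1‖ = ‖y‖ + |μ|`, and `α : A → ℓ²(ℕ)^~`, `(λ,x) + μ1 ↦ x + μ1`, is the natural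
unital projection onto the unitization `ℓ²(ℕ)^~ = TrivSqZeroExt 𝕜 ℓ²(ℕ)` of `ℓ²(ℕ)`
with the trivial product. -/

noncomputable section

variable {𝕜 : Type*} [RCLike 𝕜]

/-- The bilinear duality pairing `⟨x, y⟩ = ∑ₙ xₙyₙ` on `ℓ²(ℕ)`. -/
def ellTwoPairing (x y : lp (fun _ : ℕ => 𝕜) 2) : 𝕜 :=
  ∑' n, x n * y n

lemma ellTwoPairing_eq_inner (x y : lp (fun _ : ℕ => 𝕜) 2) :
    ellTwoPairing x y = inner (𝕜 := 𝕜) (star x) y := by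
  rw [ellTwoPairing, lp.inner_eq_tsum]
  refine tsum_congr fun n => ?_
  simp [RCLike.inner_apply, mul_comm]

lemma summable_ellTwoPairing (x y : lp (fun _ : ℕ => 𝕜) 2) :
    Summable fun n => x n * y n := by
  have h := lp.summable_inner (𝕜 := 𝕜) (star x) y
  refine h.congr fun n => ?_
  simp [RCLike.inner_apply, mul_comm]

/-- The Banach space `𝕜 ⊕₁ ℓ²(ℕ)`, to be endowed (depending on a norm-at-most-one
operator `U` on `ℓ²(ℕ)`) with the product `(λ,x)(μ,y) = (⟨Ux, y⟩, 0)`. -/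
def ReadCore (𝕜 : Type*) [RCLike 𝕜]
    (_U : {U : lp (fun _ : ℕ => 𝕜) 2 →L[𝕜] lp (fun _ : ℕ => 𝕜) 2 // ‖U‖ ≤ 1}) :
    Type _ :=
  WithLp 1 (𝕜 × lp (fun _ : ℕ => 𝕜) 2)

namespace ReadCore

variable {U : {U : lp (fun _ : ℕ => 𝕜) 2 →L[𝕜] lp (fun _ : ℕ => 𝕜) 2 // ‖U‖ ≤ 1}}

instance : NormedAddCommGroup (ReadCore 𝕜 U) :=
  inferInstanceAs (NormedAddCommGroup (WithLp 1 (𝕜 × lp (fun _ : ℕ => 𝕜) 2)))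

instance : NormedSpace 𝕜 (ReadCore 𝕜 U) :=
  inferInstanceAs (NormedSpace 𝕜 (WithLp 1 (𝕜 × lp (fun _ : ℕ => 𝕜) 2)))

instance : CompleteSpace (ReadCore 𝕜 U) :=
  inferInstanceAs (CompleteSpace (WithLp 1 (𝕜 × lp (fun _ : ℕ => 𝕜) 2)))

/-- The scalar component `λ` of `(λ, x)`. -/
def scal (p : ReadCore 𝕜 U) : 𝕜 :=
  (WithLp.equiv 1 (𝕜 × lp (fun _ : ℕ => 𝕜) 2) p).1

/-- The vector component `x` of `(λ, x)`. -/
def vec (p : ReadCore 𝕜 U) : lp (fun _ : ℕ => 𝕜) 2 :=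
  (WithLp.equiv 1 (𝕜 × lp (fun _ : ℕ => 𝕜) 2) p).2

/-- Construct an element `(λ, x)` of `𝕜 ⊕ ℓ²(ℕ)`. -/
def mk (c : 𝕜) (x : lp (fun _ : ℕ => 𝕜) 2) : ReadCore 𝕜 U :=
  (WithLp.equiv 1 (𝕜 × lp (fun _ : ℕ => 𝕜) 2)).symm (c, x)

lemma ext {p q : ReadCore 𝕜 U} (h₁ : p.scal = q.scal) (h₂ : p.vec = q.vec) : p = q :=
  (WithLp.equiv 1 (𝕜 × lp (fun _ : ℕ => 𝕜) 2)).injective (Prod.ext h₁ h₂)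

/-- The product `(λ,x)(μ,y) = (⟨Ux, y⟩, 0)`. -/
instance : Mul (ReadCore 𝕜 U) :=
  ⟨fun p q => mk (ellTwoPairing ((U : lp (fun _ : ℕ => 𝕜) 2 →L[𝕜] lp (fun _ : ℕ => 𝕜) 2)
    p.vec) q.vec) 0⟩

lemma mul_def (p q : ReadCore 𝕜 U) :
    p * q = mk (ellTwoPairing ((U : lp (fun _ : ℕ => 𝕜) 2 →L[𝕜] lp (fun _ : ℕ => 𝕜) 2)
      p.vec) q.vec) 0 :=
  rfl

@[simp] lemma scal_mul (p q : ReadCore 𝕜 U) :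
    (p * q).scal = ellTwoPairing ((U : lp (fun _ : ℕ => 𝕜) 2 →L[𝕜] lp (fun _ : ℕ => 𝕜) 2)
      p.vec) q.vec := rfl

@[simp] lemma vec_mul (p q : ReadCore 𝕜 U) : (p * q).vec = 0 := rfl
@[simp] lemma scal_add (p q : ReadCore 𝕜 U) : (p + q).scal = p.scal + q.scal := rfl
@[simp] lemma vec_add (p q : ReadCore 𝕜 U) : (p + q).vec = p.vec + q.vec := rfl
@[simp] lemma scal_smul (c : 𝕜) (p : ReadCore 𝕜 U) : (c • p).scal = c * p.scal := rfl
@[simp] lemma vec_smul (c : 𝕜) (p : ReadCore 𝕜 U) : (c • p).vec = c • p.vec := rfl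
@[simp] lemma scal_zero : (0 : ReadCore 𝕜 U).scal = 0 := rfl
@[simp] lemma vec_zero : (0 : ReadCore 𝕜 U).vec = 0 := rfl
@[simp] lemma scal_mk (c : 𝕜) (x : lp (fun _ : ℕ => 𝕜) 2) : (mk (U := U) c x).scal = c := rfl
@[simp] lemma vec_mk (c : 𝕜) (x : lp (fun _ : ℕ => 𝕜) 2) : (mk (U := U) c x).vec = x := rfl

lemma ellTwoPairing_add_right (x y z : lp (fun _ : ℕ => 𝕜) 2) :
    ellTwoPairing x (y + z) = ellTwoPairing x y + ellTwoPairing x z := by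
  simp only [ellTwoPairing_eq_inner]
  exact inner_add_right _ _ _

lemma ellTwoPairing_add_left (x y z : lp (fun _ : ℕ => 𝕜) 2) :
    ellTwoPairing (x + y) z = ellTwoPairing x z + ellTwoPairing y z := by
  simp only [ellTwoPairing_eq_inner, star_add]
  exact inner_add_left _ _ _

@[simp] lemma ellTwoPairing_zero_left (y : lp (fun _ : ℕ => 𝕜) 2) :
    ellTwoPairing (0 : lp (fun _ : ℕ => 𝕜) 2) y = 0 := by
  simp [ellTwoPairing_eq_inner]

@[simp] lemma ellTwoPairing_zero_right (x : lp (fun _ : ℕ => 𝕜) 2) :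
    ellTwoPairing x (0 : lp (fun _ : ℕ => 𝕜) 2) = 0 := by
  simp [ellTwoPairing_eq_inner]

lemma ellTwoPairing_smul_left (c : 𝕜) (x y : lp (fun _ : ℕ => 𝕜) 2) :
    ellTwoPairing (c • x) y = c * ellTwoPairing x y := by
  simp only [ellTwoPairing]
  rw [← tsum_mul_left]
  refine tsum_congr fun n => ?_
  simp [mul_assoc]

lemma ellTwoPairing_smul_right (c : 𝕜) (x y : lp (fun _ : ℕ => 𝕜) 2) :
    ellTwoPairing x (c • y) = c * ellTwoPairing x y := by
  simp only [ellTwoPairing]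
  rw [← tsum_mul_left]
  refine tsum_congr fun n => ?_
  simp; ring

instance : NonUnitalRing (ReadCore 𝕜 U) :=
  { (inferInstance : AddCommGroup (ReadCore 𝕜 U)),
    (inferInstance : Mul (ReadCore 𝕜 U)) with
    left_distrib := fun p q r => ext (by simp [ellTwoPairing_add_right]) (by simp)
    right_distrib := fun p q r => ext (by simp [ellTwoPairing_add_left]) (by simp)
    zero_mul := fun p => ext (by simp) (by simp)
    mul_zero := fun p => ext (by simp) (by simp)
    mul_assoc := fun p q r => ext (by simp) (by simp) }

lemma norm_def (p : ReadCore 𝕜 U) : ‖p‖ = ‖p.scal‖ + ‖p.vec‖ := by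
  have h : ∀ q : WithLp 1 (𝕜 × lp (fun _ : ℕ => 𝕜) 2),
      ‖q‖ = ‖(WithLp.equiv 1 _ q).1‖ + ‖(WithLp.equiv 1 _ q).2‖ := fun q => by
    rw [WithLp.prod_norm_eq_add (by norm_num)]
    norm_num
  exact h p

lemma norm_ellTwoPairing_le (x y : lp (fun _ : ℕ => 𝕜) 2) :
    ‖ellTwoPairing x y‖ ≤ ‖x‖ * ‖y‖ := by
  haveI : Fact ((1 : ENNReal) ≤ 2) := ⟨one_le_two⟩
  rw [ellTwoPairing_eq_inner]
  calc ‖(inner 𝕜 (star x) y : 𝕜)‖ ≤ ‖star x‖ * ‖y‖ := norm_inner_le_norm _ _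
    _ = ‖x‖ * ‖y‖ := by rw [norm_star]

instance : NonUnitalNormedRing (ReadCore 𝕜 U) :=
  { (inferInstance : NonUnitalRing (ReadCore 𝕜 U)),
    (inferInstance : NormedAddCommGroup (ReadCore 𝕜 U)) with
    norm_mul_le := by
      intro p q
      rw [norm_def, norm_def p, norm_def q]
      have h0 : ‖(p * q).vec‖ = 0 := by rw [vec_mul, norm_zero]
      rw [h0, add_zero]
      have h1 : ‖(p * q).scal‖ ≤ ‖p.vec‖ * ‖q.vec‖ := by
        rw [scal_mul]
        calc ‖ellTwoPairing ((U : lp (fun _ : ℕ => 𝕜) 2 →L[𝕜] lp (fun _ : ℕ => 𝕜) 2)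
              p.vec) q.vec‖
            ≤ ‖(U : lp (fun _ : ℕ => 𝕜) 2 →L[𝕜] lp (fun _ : ℕ => 𝕜) 2) p.vec‖ * ‖q.vec‖ :=
              norm_ellTwoPairing_le _ _
          _ ≤ (‖(U : lp (fun _ : ℕ => 𝕜) 2 →L[𝕜] lp (fun _ : ℕ => 𝕜) 2)‖ * ‖p.vec‖) * ‖q.vec‖ :=
              mul_le_mul_of_nonneg_right (ContinuousLinearMap.le_opNorm _ _) (norm_nonneg _)
          _ ≤ (1 * ‖p.vec‖) * ‖q.vec‖ := by
              have := U.2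
              gcongr
          _ = ‖p.vec‖ * ‖q.vec‖ := by ring
      calc ‖(p * q).scal‖ ≤ ‖p.vec‖ * ‖q.vec‖ := h1
        _ ≤ (‖p.scal‖ + ‖p.vec‖) * (‖q.scal‖ + ‖q.vec‖) := by
            have := norm_nonneg p.scal
            have := norm_nonneg q.scal
            have := norm_nonneg p.vec
            have := norm_nonneg q.vec
            nlinarith }

instance : IsScalarTower 𝕜 (ReadCore 𝕜 U) (ReadCore 𝕜 U) :=
  ⟨fun c p q => ext (by simp [ellTwoPairing_smul_left]) (by simp)⟩

instance : SMulCommClass 𝕜 (ReadCore 𝕜 U) (ReadCore 𝕜 U) :=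
  ⟨fun c p q => ext (by simp [ellTwoPairing_smul_right]) (by simp)⟩

end ReadCore

/-- The unitization `A` of the Banach algebra `𝕜 ⊕ ℓ²(ℕ)` (with the product
`(λ,x)(μ,y) = (⟨Ux, y⟩, 0)`), equipped with the norm `‖y + μ1‖ = ‖y‖ + |μ|`. -/
abbrev ReadUnitization (𝕜 : Type*) [RCLike 𝕜]
    (U : {U : lp (fun _ : ℕ => 𝕜) 2 →L[𝕜] lp (fun _ : ℕ => 𝕜) 2 // ‖U‖ ≤ 1}) :
    Type _ :=
  WithLp 1 (Unitization 𝕜 (ReadCore 𝕜 U))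

/-- The scalar (unit) component `μ` of `(λ,x) + μ1 ∈ A`. -/
def ReadUnitization.scal {U : {U : lp (fun _ : ℕ => 𝕜) 2 →L[𝕜] lp (fun _ : ℕ => 𝕜) 2 // ‖U‖ ≤ 1}}
    (a : ReadUnitization 𝕜 U) : 𝕜 :=
  (WithLp.equiv 1 (Unitization 𝕜 (ReadCore 𝕜 U)) a).fst

/-- The `ℓ²(ℕ)`-component `x` of `(λ,x) + μ1 ∈ A`. -/
def ReadUnitization.vec {U : {U : lp (fun _ : ℕ => 𝕜) 2 →L[𝕜] lp (fun _ : ℕ => 𝕜) 2 // ‖U‖ ≤ 1}}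
    (a : ReadUnitization 𝕜 U) : lp (fun _ : ℕ => 𝕜) 2 :=
  ((WithLp.equiv 1 (Unitization 𝕜 (ReadCore 𝕜 U)) a).snd).vec


/-!
A multiplicative right inverse `ρ` of `α` must send `x ∈ ℓ²(ℕ)` to some `(λₓ, x) + 0·1`. Since
`x · y = 0` in `ℓ²(ℕ)^~`, the product `ρ(x)ρ(y) = (⟨Ux, y⟩, 0)` has to vanish, and `⟨Ux, y⟩ = 0`
for all `x, y` forces `U = 0` (take `y = conj (Ux)`). Conversely, the isometric linear section
`x + μ1 ↦ (0, x) + μ1` of `α` is multiplicative exactly when the product of `ReadCore` is zero.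
Singularity is immediate: `ker α` consists of the elements `(λ, 0)`, and
`(λ, 0)(μ, 0) = (⟨U0, 0⟩, 0)`.
-/

lemma ellTwoPairing_star_self_eq_zero_iff (x : lp (fun _ : ℕ => 𝕜) 2) :
    ellTwoPairing x (star x) = 0 ↔ x = 0 := by
  rw [ellTwoPairing_eq_inner, inner_self_eq_zero, star_eq_zero]

lemma eq_zero_of_ellTwoPairing_apply_eq_zero
    {T : lp (fun _ : ℕ => 𝕜) 2 →L[𝕜] lp (fun _ : ℕ => 𝕜) 2}
    (h : ∀ x y, ellTwoPairing (T x) y = 0) : T = 0 :=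
  ContinuousLinearMap.ext fun x => (ellTwoPairing_star_self_eq_zero_iff _).1 (h x _)

namespace ReadUnitization

variable {U : {U : lp (fun _ : ℕ => 𝕜) 2 →L[𝕜] lp (fun _ : ℕ => 𝕜) 2 // ‖U‖ ≤ 1}}

/-- The coordinate `λ` of `(λ,x) + μ1 ∈ A`. -/
def coreScal (a : ReadUnitization 𝕜 U) : 𝕜 :=
  ((WithLp.equiv 1 (Unitization 𝕜 (ReadCore 𝕜 U)) a).snd).scal

/-- The element `(λ,x) + μ1` of `A`. -/
def mk (μ lam : 𝕜) (x : lp (fun _ : ℕ => 𝕜) 2) : ReadUnitization 𝕜 U :=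
  (WithLp.equiv 1 (Unitization 𝕜 (ReadCore 𝕜 U))).symm
    (Unitization.inl μ + Unitization.inr (ReadCore.mk lam x))

lemma ext {a b : ReadUnitization 𝕜 U} (h₁ : a.scal = b.scal) (h₂ : a.coreScal = b.coreScal)
    (h₃ : a.vec = b.vec) : a = b :=
  (WithLp.equiv 1 (Unitization 𝕜 (ReadCore 𝕜 U))).injective
    (Unitization.ext h₁ (ReadCore.ext h₂ h₃))

@[simp] lemma scal_mk (μ lam : 𝕜) (x : lp (fun _ : ℕ => 𝕜) 2) :
    (mk (U := U) μ lam x).scal = μ := by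
  simp [mk, ReadUnitization.scal]

@[simp] lemma coreScal_mk (μ lam : 𝕜) (x : lp (fun _ : ℕ => 𝕜) 2) :
    (mk (U := U) μ lam x).coreScal = lam := by
  simp [mk, coreScal]

@[simp] lemma vec_mk (μ lam : 𝕜) (x : lp (fun _ : ℕ => 𝕜) 2) :
    (mk (U := U) μ lam x).vec = x := by
  simp [mk, ReadUnitization.vec]

@[simp] lemma scal_add (a b : ReadUnitization 𝕜 U) : (a + b).scal = a.scal + b.scal := rfl
@[simp] lemma coreScal_add (a b : ReadUnitization 𝕜 U) :
    (a + b).coreScal = a.coreScal + b.coreScal := rfl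
@[simp] lemma vec_add (a b : ReadUnitization 𝕜 U) : (a + b).vec = a.vec + b.vec := rfl
@[simp] lemma scal_smul (c : 𝕜) (a : ReadUnitization 𝕜 U) : (c • a).scal = c * a.scal := rfl
@[simp] lemma coreScal_smul (c : 𝕜) (a : ReadUnitization 𝕜 U) :
    (c • a).coreScal = c * a.coreScal := rfl
@[simp] lemma vec_smul (c : 𝕜) (a : ReadUnitization 𝕜 U) : (c • a).vec = c • a.vec := rfl
@[simp] lemma scal_zero : (0 : ReadUnitization 𝕜 U).scal = 0 := rfl
@[simp] lemma coreScal_zero : (0 : ReadUnitization 𝕜 U).coreScal = 0 := rfl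
@[simp] lemma vec_zero : (0 : ReadUnitization 𝕜 U).vec = 0 := rfl

@[simp] lemma scal_mul (a b : ReadUnitization 𝕜 U) : (a * b).scal = a.scal * b.scal := rfl

@[simp] lemma coreScal_mul (a b : ReadUnitization 𝕜 U) :
    (a * b).coreScal = a.scal * b.coreScal + b.scal * a.coreScal +
      ellTwoPairing ((U : lp (fun _ : ℕ => 𝕜) 2 →L[𝕜] lp (fun _ : ℕ => 𝕜) 2) a.vec) b.vec := by
  simp [coreScal, ReadUnitization.scal, ReadUnitization.vec, WithLp.unitization_mul,
    Unitization.snd_mul]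

@[simp] lemma vec_mul (a b : ReadUnitization 𝕜 U) :
    (a * b).vec = a.scal • b.vec + b.scal • a.vec := by
  simp [ReadUnitization.scal, ReadUnitization.vec, WithLp.unitization_mul, Unitization.snd_mul]

lemma norm_eq (a : ReadUnitization 𝕜 U) : ‖a‖ = ‖a.scal‖ + ‖a.coreScal‖ + ‖a.vec‖ := by
  rw [WithLp.unitization_norm_def, ReadCore.norm_def, ← add_assoc]
  rfl

/-- The natural unital projection `α : A → ℓ²(ℕ)^~`, `(λ,x) + μ1 ↦ x + μ1`. -/
def projection (U : {U : lp (fun _ : ℕ => 𝕜) 2 →L[𝕜] lp (fun _ : ℕ => 𝕜) 2 // ‖U‖ ≤ 1}) :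
    ReadUnitization 𝕜 U →ₙₐ[𝕜] TrivSqZeroExt 𝕜 (lp (fun _ : ℕ => 𝕜) 2) where
  toFun a := TrivSqZeroExt.inl a.scal + TrivSqZeroExt.inr a.vec
  map_add' a b := by ext <;> simp
  map_smul' c a := by ext <;> simp
  map_zero' := by ext <;> simp
  map_mul' a b := by ext <;> simp [TrivSqZeroExt.snd_mul, op_smul_eq_smul]

@[simp] lemma fst_projection (a : ReadUnitization 𝕜 U) : (projection U a).fst = a.scal := by
  simp [projection]

@[simp] lemma snd_projection (a : ReadUnitization 𝕜 U) : (projection U a).snd = a.vec := by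
  simp [projection]

lemma continuous_projection : Continuous (projection U) :=
  AddMonoidHomClass.continuous_of_bound (projection U) 1 fun a => by
    rw [one_mul, TrivSqZeroExt.norm_def, fst_projection, snd_projection, norm_eq]
    linarith [norm_nonneg a.coreScal]

lemma mul_eq_zero_of_projection_eq_zero {a b : ReadUnitization 𝕜 U} (ha : projection U a = 0)
    (hb : projection U b = 0) : a * b = 0 := by
  have ha₁ : a.scal = 0 := by simpa using congrArg TrivSqZeroExt.fst ha
  have ha₂ : a.vec = 0 := by simpa using congrArg TrivSqZeroExt.snd ha
  have hb₁ : b.scal = 0 := by simpa using congrArg TrivSqZeroExt.fst hb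
  apply ext <;> simp [ha₁, ha₂, hb₁]

/-- The isometric linear section `x + μ1 ↦ (0,x) + μ1` of `α`. -/
def sectionCLM (U : {U : lp (fun _ : ℕ => 𝕜) 2 →L[𝕜] lp (fun _ : ℕ => 𝕜) 2 // ‖U‖ ≤ 1}) :
    TrivSqZeroExt 𝕜 (lp (fun _ : ℕ => 𝕜) 2) →L[𝕜] ReadUnitization 𝕜 U :=
  LinearMap.mkContinuous
    { toFun c := mk c.fst 0 c.snd
      map_add' c d := by apply ext <;> simp
      map_smul' r c := by apply ext <;> simp }
    1 fun c => by simp [norm_eq, TrivSqZeroExt.norm_def]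

@[simp] lemma scal_sectionCLM (c : TrivSqZeroExt 𝕜 (lp (fun _ : ℕ => 𝕜) 2)) :
    (sectionCLM U c).scal = c.fst :=
  scal_mk _ _ _

@[simp] lemma coreScal_sectionCLM (c : TrivSqZeroExt 𝕜 (lp (fun _ : ℕ => 𝕜) 2)) :
    (sectionCLM U c).coreScal = 0 :=
  coreScal_mk _ _ _

@[simp] lemma vec_sectionCLM (c : TrivSqZeroExt 𝕜 (lp (fun _ : ℕ => 𝕜) 2)) :
    (sectionCLM U c).vec = c.snd :=
  vec_mk _ _ _

lemma projection_sectionCLM (c : TrivSqZeroExt 𝕜 (lp (fun _ : ℕ => 𝕜) 2)) :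
    projection U (sectionCLM U c) = c := by
  ext <;> simp

lemma sectionCLM_mul (hU : (U : lp (fun _ : ℕ => 𝕜) 2 →L[𝕜] lp (fun _ : ℕ => 𝕜) 2) = 0)
    (c d : TrivSqZeroExt 𝕜 (lp (fun _ : ℕ => 𝕜) 2)) :
    sectionCLM U (c * d) = sectionCLM U c * sectionCLM U d := by
  apply ext <;> simp [hU, TrivSqZeroExt.snd_mul, op_smul_eq_smul]

def sectionNonUnitalAlgHom
    (hU : (U : lp (fun _ : ℕ => 𝕜) 2 →L[𝕜] lp (fun _ : ℕ => 𝕜) 2) = 0) :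
    TrivSqZeroExt 𝕜 (lp (fun _ : ℕ => 𝕜) 2) →ₙₐ[𝕜] ReadUnitization 𝕜 U :=
  { sectionCLM U with
    map_zero' := (sectionCLM U).map_zero
    map_mul' := sectionCLM_mul hU }

lemma eq_zero_of_projection_comp_eq_id
    (ρ : TrivSqZeroExt 𝕜 (lp (fun _ : ℕ => 𝕜) 2) →ₙₐ[𝕜] ReadUnitization 𝕜 U)
    (hρ : ∀ c, projection U (ρ c) = c) :
    (U : lp (fun _ : ℕ => 𝕜) 2 →L[𝕜] lp (fun _ : ℕ => 𝕜) 2) = 0 := by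
  have hscal (x) : (ρ (TrivSqZeroExt.inr x)).scal = 0 := by
    simpa using congrArg TrivSqZeroExt.fst (hρ (TrivSqZeroExt.inr x))
  have hvec (x) : (ρ (TrivSqZeroExt.inr x)).vec = x := by
    simpa using congrArg TrivSqZeroExt.snd (hρ (TrivSqZeroExt.inr x))
  refine eq_zero_of_ellTwoPairing_apply_eq_zero fun x y => ?_
  have hxy : ρ (TrivSqZeroExt.inr x) * ρ (TrivSqZeroExt.inr y) = 0 := by
    rw [← map_mul, TrivSqZeroExt.inr_mul_inr, map_zero]
  simpa [hscal, hvec] using congrArg coreScal hxy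

end ReadUnitization

/-- Let `U ∈ B(ℓ²(ℕ))` with `‖U‖ ≤ 1`, let `A` be the unitization of the Banach algebra
`𝕜 ⊕ ℓ²(ℕ)` with product `(λ,x)(μ,y) = (⟨Ux, y⟩, 0)` and norm `‖(λ,x)‖ = |λ| + ‖x‖`,
and let `α : A → ℓ²(ℕ)^~`, `(λ,x) + μ1 ↦ x + μ1`, be the natural unital projection.
Then `α` is a continuous surjective algebra homomorphism, the corresponding extension
`0 → ker α → A → ℓ²(ℕ)^~ → 0` is singular and admissible, and the following are
equivalent: `α` has an algebra homomorphism right inverse; `α` has a continuous algebra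
homomorphism right inverse; `U = 0`. -/
theorem readUnitization_extension_singular_admissible_split_iff_zero
    (U : lp (fun _ : ℕ => 𝕜) 2 →L[𝕜] lp (fun _ : ℕ => 𝕜) 2) (hU : ‖U‖ ≤ 1) :
    ∃ α : ReadUnitization 𝕜 ⟨U, hU⟩ →ₙₐ[𝕜] TrivSqZeroExt 𝕜 (lp (fun _ : ℕ => 𝕜) 2),
      (∀ a : ReadUnitization 𝕜 ⟨U, hU⟩,
        α a = TrivSqZeroExt.inl a.scal + TrivSqZeroExt.inr a.vec) ∧
      Continuous α ∧
      Function.Surjective α ∧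
      (∀ a b : ReadUnitization 𝕜 ⟨U, hU⟩, α a = 0 → α b = 0 → a * b = 0) ∧
      (∃ ρ : TrivSqZeroExt 𝕜 (lp (fun _ : ℕ => 𝕜) 2) →L[𝕜] ReadUnitization 𝕜 ⟨U, hU⟩,
        ∀ c, α (ρ c) = c) ∧
      ((∃ ρ : TrivSqZeroExt 𝕜 (lp (fun _ : ℕ => 𝕜) 2) →ₙₐ[𝕜] ReadUnitization 𝕜 ⟨U, hU⟩,
        ∀ c, α (ρ c) = c) ↔ U = 0) ∧
      ((∃ ρ : TrivSqZeroExt 𝕜 (lp (fun _ : ℕ => 𝕜) 2) →ₙₐ[𝕜] ReadUnitization 𝕜 ⟨U, hU⟩,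
        Continuous ρ ∧ ∀ c, α (ρ c) = c) ↔ U = 0) := by
  refine ⟨ReadUnitization.projection ⟨U, hU⟩, fun _ => rfl,
    ReadUnitization.continuous_projection,
    fun c => ⟨_, ReadUnitization.projection_sectionCLM c⟩,
    fun _ _ => ReadUnitization.mul_eq_zero_of_projection_eq_zero,
    ⟨_, ReadUnitization.projection_sectionCLM⟩, ⟨?_, ?_⟩, ⟨?_, ?_⟩⟩
  · rintro ⟨ρ, hρ⟩
    exact ReadUnitization.eq_zero_of_projection_comp_eq_id ρ hρ
  · intro h
    exact ⟨ReadUnitization.sectionNonUnitalAlgHom h, ReadUnitization.projection_sectionCLM⟩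
  · rintro ⟨ρ, -, hρ⟩
    exact ReadUnitization.eq_zero_of_projection_comp_eq_id ρ hρ
  · intro h
    exact ⟨ReadUnitization.sectionNonUnitalAlgHom h, (ReadUnitization.sectionCLM _).continuous,
      ReadUnitization.projection_sectionCLM⟩

end
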